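/- arXiv:1712.02848 — 4 statements merged into one kernel-verified Lean document; each statement's English description precedes it below -/
import Mathlib

section
/- Let H be a complex Hilbert space, let J = [c,d] be a compact subinterval of [0,∞), let (a_λ)_{λ∈Λ} be a net (indexed by a nonempty directed set Λ) of maps from J to B(H) each of whose values is a contraction (operator norm at most 1), and let a : J → B(H) be a map whose values are all isometries and which is strongly continuous (t ↦ a(t)η is continuous for each η ∈ H). Suppose that for all ζ, η ∈ H the scalar functions t ↦ ⟨ζ, a_λ(t)η⟩ converge to t ↦ ⟨ζ, a(t)η⟩ uniformly on J along the net. Then for every η ∈ H the functions t ↦ a_λ(t)η converge to t ↦ a(t)η uniformly on J along the net, i.e. sup_{t∈J} ‖a_λ(t)η − a(t)η‖ → 0. -/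
open Filter Topology

noncomputable section

/-!
Fix `η` and write `x = a_λ(t) η`, `y = a(t) η`. Since `‖x‖ ≤ ‖η‖ = ‖y‖`, expanding the square gives
`‖x - y‖² ≤ 2 Re ⟪y, y - x⟫`, so it suffices that `⟪y, y - x⟫ → 0` uniformly in `t`. The test vector
`y` now varies with `t`, but it ranges over the compact orbit `a(J) η`. Because the vectors `y - x`
are uniformly bounded, `ζ ↦ ⟪ζ, y - x⟫` is uniformly Lipschitz, so weak convergence that is uniform
in `t` for each fixed `ζ` is also uniform in `ζ` over a finite net of the orbit, hence over the
whole orbit.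
-/

section InnerProductSpace

variable {𝕜 E : Type*} [RCLike 𝕜] [NormedAddCommGroup E] [InnerProductSpace 𝕜 E]

theorem norm_sub_sq_le_two_mul_re_inner_of_norm_le {x y : E} (h : ‖x‖ ≤ ‖y‖) :
    ‖x - y‖ ^ 2 ≤ 2 * RCLike.re (inner 𝕜 y (y - x)) := by
  have hsq : ‖x‖ ^ 2 ≤ ‖y‖ ^ 2 := pow_le_pow_left₀ (norm_nonneg x) h 2
  rw [norm_sub_sq (𝕜 := 𝕜), inner_sub_right, map_sub, inner_self_eq_norm_sq (𝕜 := 𝕜),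
    inner_re_symm (𝕜 := 𝕜) x y]
  linarith

variable {X ι : Type*} {l : Filter ι}

theorem tendstoUniformlyOn_inner_prod_of_totallyBounded {F : ι → X → E} {f : X → E}
    {S : Set X} {K : Set E} {C : ℝ} (hK : TotallyBounded K)
    (hbdd : ∀ i, ∀ x ∈ S, ‖F i x - f x‖ ≤ C)
    (hweak : ∀ ζ : E, TendstoUniformlyOn (fun i x => inner 𝕜 ζ (F i x))
      (fun x => inner 𝕜 ζ (f x)) l S) :
    TendstoUniformlyOn (fun i (p : E × X) => inner 𝕜 p.1 (F i p.2))
      (fun p => inner 𝕜 p.1 (f p.2)) l (K ×ˢ S) := by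
  rw [Metric.tendstoUniformlyOn_iff]
  intro ε hε
  set δ := ε / (2 * (|C| + 1)) with hδ
  obtain ⟨T, hTfin, hKT⟩ := Metric.totallyBounded_iff.mp hK δ (by positivity)
  have hnet : ∀ᶠ i in l, ∀ z ∈ T, ∀ x ∈ S,
      dist (inner 𝕜 z (f x)) (inner 𝕜 z (F i x)) < ε / 2 :=
    (eventually_all_finite hTfin).mpr fun z _ =>
      Metric.tendstoUniformlyOn_iff.mp (hweak z) _ (half_pos hε)
  filter_upwards [hnet] with i hi
  rintro ⟨ζ, x⟩ ⟨hζ, hx⟩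
  obtain ⟨z, hzT, hζz⟩ := Set.mem_iUnion₂.mp (hKT hζ)
  have hfar : ‖inner 𝕜 (ζ - z) (f x - F i x)‖ ≤ ε / 2 :=
    calc ‖inner 𝕜 (ζ - z) (f x - F i x)‖ ≤ ‖ζ - z‖ * ‖f x - F i x‖ := norm_inner_le_norm _ _
      _ ≤ δ * (|C| + 1) := by
        rw [norm_sub_rev (f x)]
        gcongr
        · exact (mem_ball_iff_norm.mp hζz).le
        · exact (hbdd i x hx).trans ((le_abs_self C).trans (le_add_of_nonneg_right zero_le_one))
      _ = ε / 2 := by rw [hδ]; field_simp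
  have hnear : ‖inner 𝕜 z (f x - F i x)‖ < ε / 2 := by
    simpa only [dist_eq_norm, inner_sub_right] using hi z hzT x hx
  calc dist (inner 𝕜 ζ (f x)) (inner 𝕜 ζ (F i x))
      = ‖inner 𝕜 (ζ - z) (f x - F i x) + inner 𝕜 z (f x - F i x)‖ := by
        rw [dist_eq_norm, ← inner_sub_right, ← inner_add_left, sub_add_cancel]
    _ ≤ ‖inner 𝕜 (ζ - z) (f x - F i x)‖ + ‖inner 𝕜 z (f x - F i x)‖ := norm_add_le _ _
    _ < ε := by linarith

theorem tendstoUniformlyOn_of_weakly_of_norm_le {F : ι → X → E} {f : X → E} {S : Set X}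
    (hK : TotallyBounded (f '' S)) (hnorm : ∀ i, ∀ x ∈ S, ‖F i x‖ ≤ ‖f x‖)
    (hweak : ∀ ζ : E, TendstoUniformlyOn (fun i x => inner 𝕜 ζ (F i x))
      (fun x => inner 𝕜 ζ (f x)) l S) :
    TendstoUniformlyOn F f l S := by
  obtain ⟨R, hR⟩ := isBounded_iff_forall_norm_le.mp hK.isBounded
  have hbdd : ∀ i, ∀ x ∈ S, ‖F i x - f x‖ ≤ R + R := fun i x hx =>
    (norm_sub_le _ _).trans (add_le_add ((hnorm i x hx).trans (hR _ ⟨x, hx, rfl⟩))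
      (hR _ ⟨x, hx, rfl⟩))
  have hdiag : TendstoUniformlyOn (fun i x => inner 𝕜 (f x) (F i x))
      (fun x => inner 𝕜 (f x) (f x)) l S :=
    ((tendstoUniformlyOn_inner_prod_of_totallyBounded hK hbdd hweak).comp
      fun x => (f x, x)).mono fun x hx => ⟨⟨x, hx, rfl⟩, hx⟩
  rw [Metric.tendstoUniformlyOn_iff] at hdiag ⊢
  intro ε hε
  filter_upwards [hdiag (ε ^ 2 / 2) (by positivity)] with i hi x hx
  have hsq : ‖F i x - f x‖ ^ 2 < ε ^ 2 :=
    calc ‖F i x - f x‖ ^ 2 ≤ 2 * RCLike.re (inner 𝕜 (f x) (f x - F i x)) :=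
          norm_sub_sq_le_two_mul_re_inner_of_norm_le (hnorm i x hx)
      _ ≤ 2 * dist (inner 𝕜 (f x) (f x)) (inner 𝕜 (f x) (F i x)) := by
          rw [dist_eq_norm, ← inner_sub_right]
          gcongr
          exact RCLike.re_le_norm _
      _ < ε ^ 2 := by linarith [hi x hx]
  rw [dist_comm, dist_eq_norm]
  exact lt_of_pow_lt_pow_left₀ 2 hε.le hsq

end InnerProductSpace

theorem weak_to_strong_uniform_convergence_general
    {H : Type*} [NormedAddCommGroup H] [InnerProductSpace ℂ H]
    {Λ : Type*} [Preorder Λ]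
    (c d : ℝ)
    (aNet : Λ → ℝ → H →L[ℂ] H) (a : ℝ → H →L[ℂ] H)
    (haNet_contr : ∀ lam : Λ, ∀ t ∈ Set.Icc c d, ‖aNet lam t‖ ≤ 1)
    (ha_isom : ∀ t ∈ Set.Icc c d, ∀ η : H, ‖a t η‖ = ‖η‖)
    (ha_strong_cont : ∀ η : H, ContinuousOn (fun t => a t η) (Set.Icc c d))
    (hweak : ∀ ζ η : H,
      TendstoUniformlyOn (fun (lam : Λ) (t : ℝ) => (inner ℂ ζ (aNet lam t η) : ℂ))
        (fun t => (inner ℂ ζ (a t η) : ℂ)) atTop (Set.Icc c d)) :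
    ∀ η : H,
      TendstoUniformlyOn (fun (lam : Λ) (t : ℝ) => aNet lam t η)
        (fun t => a t η) atTop (Set.Icc c d) := by
  intro η
  refine tendstoUniformlyOn_of_weakly_of_norm_le
    (isCompact_Icc.image_of_continuousOn (ha_strong_cont η)).totallyBounded
    (fun lam t ht => ?_) (fun ζ => hweak ζ η)
  calc ‖aNet lam t η‖ ≤ 1 * ‖η‖ := (aNet lam t).le_of_opNorm_le (haNet_contr lam t ht) η
    _ = ‖a t η‖ := by rw [one_mul, ha_isom t ht]

theorem weak_to_strong_uniform_convergence
    {H : Type*} [NormedAddCommGroup H] [InnerProductSpace ℂ H] [CompleteSpace H]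
    {Λ : Type*} [Nonempty Λ] [Preorder Λ] [IsDirected Λ (· ≤ ·)]
    (c d : ℝ) (hc : 0 ≤ c) (hcd : c ≤ d)
    (aNet : Λ → ℝ → H →L[ℂ] H) (a : ℝ → H →L[ℂ] H)
    (haNet_contr : ∀ lam : Λ, ∀ t ∈ Set.Icc c d, ‖aNet lam t‖ ≤ 1)
    (ha_isom : ∀ t ∈ Set.Icc c d, ∀ η : H, ‖a t η‖ = ‖η‖)
    (ha_strong_cont : ∀ η : H, ContinuousOn (fun t => a t η) (Set.Icc c d))
    (hweak : ∀ ζ η : H,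
      TendstoUniformlyOn (fun (lam : Λ) (t : ℝ) => (inner ℂ ζ (aNet lam t η) : ℂ))
        (fun t => (inner ℂ ζ (a t η) : ℂ)) atTop (Set.Icc c d)) :
    ∀ η : H,
      TendstoUniformlyOn (fun (lam : Λ) (t : ℝ) => aNet lam t η)
        (fun t => a t η) atTop (Set.Icc c d) :=
  weak_to_strong_uniform_convergence_general c d aNet a haNet_contr ha_isom ha_strong_cont hweak
end
end

section
/- Let K be a complex Hilbert space, P an orthogonal projection on K, and for h > 0 let s_h(T) := S_h T S_h where S_h := h^{-1/2}(I − P) + P. Let F₁, F₂ ∈ B(K), let G₁(h), G₂(h) ∈ B(K) for each h > 0, let H' and H'' be complex Hilbert spaces, and let V ∈ B(K; H') and W ∈ B(H''; K) be bounded operators. If ‖V·(s_h(G₁(h) − I) − F₁)‖ → 0 and ‖(s_h(G₂(h) − I) − F₂)·W‖ → 0 as h → 0, then ‖V·(s_h(G₁(h)G₂(h) − I) − F₁ ◁ F₂)·W‖ → 0 as h → 0, where F₁ ◁ F₂ := F₁ + F₂ + F₁ P F₂. -/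
open ContinuousLinearMap Filter Topology

noncomputable section

/-- The operator `S_h = h^{-1/2}(I - P) + P`. -/
def scaleOp {K : Type*} [NormedAddCommGroup K] [InnerProductSpace ℂ K]
    (P : K →L[ℂ] K) (h : ℝ) : K →L[ℂ] K :=
  ((Real.sqrt h : ℂ))⁻¹ • (1 - P) + P

/-- The scaling map `s_h(T) = S_h T S_h`. -/
def scal {K : Type*} [NormedAddCommGroup K] [InnerProductSpace ℂ K]
    (P : K →L[ℂ] K) (h : ℝ) (T : K →L[ℂ] K) : K →L[ℂ] K :=
  scaleOp P h * T * scaleOp P h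

/-- The series product `F₁ ◁ F₂ = F₁ + F₂ + F₁ P F₂`. -/
def seriesProd {K : Type*} [NormedAddCommGroup K] [InnerProductSpace ℂ K]
    (P : K →L[ℂ] K) (F₁ F₂ : K →L[ℂ] K) : K →L[ℂ] K :=
  F₁ + F₂ + F₁ * P * F₂

/-! With `D_h := P + h(1 - P) = S_h⁻²` one has `S_h D_h S_h = 1`, hence
`s_h(G₁G₂ - 1) = s_h(G₁ - 1) + s_h(G₂ - 1) + s_h(G₁ - 1) D_h s_h(G₂ - 1)`.
With `X = s_h(G₁ - 1)` and `Y = s_h(G₂ - 1)`, the error `s_h(G₁G₂ - 1) - F₁ ◁ F₂` splits into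
`(X - F₁) + (Y - F₂) + (X - F₁) P Y + F₁ P (Y - F₂) + h X (1 - P) Y`. After compressing by `V` and
`W`, each term contains `V(X - F₁)`, `(Y - F₂)W` or the scalar `h`, all tending to `0`, while `VX`
and `YW` converge; so the compressed error tends to `0`. -/

theorem Filter.Tendsto.clm_comp {𝕜 α E F G : Type*} [NontriviallyNormedField 𝕜]
    [SeminormedAddCommGroup E] [NormedSpace 𝕜 E] [SeminormedAddCommGroup F] [NormedSpace 𝕜 F]
    [SeminormedAddCommGroup G] [NormedSpace 𝕜 G] {l : Filter α}
    {f : α → F →L[𝕜] G} {g : α → E →L[𝕜] F} {f₀ : F →L[𝕜] G} {g₀ : E →L[𝕜] F}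
    (hf : Tendsto f l (𝓝 f₀)) (hg : Tendsto g l (𝓝 g₀)) :
    Tendsto (fun x => (f x).comp (g x)) l (𝓝 (f₀.comp g₀)) :=
  (isBoundedBilinearMap_comp.continuous.tendsto (f₀, g₀)).comp (hf.prodMk_nhds hg)

theorem sandwich_mul_sub_one {R : Type*} [Ring R] {S D : R} (hSDS : S * D * S = 1) (a b : R) :
    S * (a * b - 1) * S
      = S * (a - 1) * S + S * (b - 1) * S + S * (a - 1) * S * D * (S * (b - 1) * S) := by
  have : S * (a - 1) * S * D * (S * (b - 1) * S) = S * (a - 1) * (S * D * S) * (b - 1) * S := by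
    simp only [mul_assoc]
  rw [this, hSDS]
  noncomm_ring

section

variable {K : Type*} [NormedAddCommGroup K] [InnerProductSpace ℂ K] {P : K →L[ℂ] K}

theorem scaleOp_mul_mul_scaleOp (hP2 : P * P = P) {h : ℝ} (hh : 0 < h) :
    scaleOp P h * (P + (h : ℂ) • (1 - P)) * scaleOp P h = 1 := by
  have hsqrt : ((Real.sqrt h : ℂ))⁻¹ * ((h : ℂ) * ((Real.sqrt h : ℂ))⁻¹) = 1 := by
    rw [mul_left_comm, ← mul_inv, ← Complex.ofReal_mul, Real.mul_self_sqrt hh.le,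
      mul_inv_cancel₀ (by exact_mod_cast hh.ne')]
  have hQ : (1 - P) * (1 - P) = 1 - P := by simp [mul_sub, sub_mul, hP2]
  have hPQ : P * (1 - P) = 0 := by simp [mul_sub, hP2]
  have hQP : (1 - P) * P = 0 := by simp [sub_mul, hP2]
  simp only [scaleOp, mul_add, add_mul, smul_mul_assoc, mul_smul_comm, smul_smul, hQ, hPQ, hQP,
    hP2, smul_zero, add_zero, zero_add, hsqrt, one_smul, sub_add_cancel]

theorem scal_mul_sub_one_sub_seriesProd (hP2 : P * P = P) {h : ℝ} (hh : 0 < h)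
    (F₁ F₂ G₁ G₂ : K →L[ℂ] K) :
    scal P h (G₁ * G₂ - 1) - seriesProd P F₁ F₂
      = (scal P h (G₁ - 1) - F₁) + (scal P h (G₂ - 1) - F₂)
        + (scal P h (G₁ - 1) - F₁) * P * scal P h (G₂ - 1)
        + F₁ * P * (scal P h (G₂ - 1) - F₂)
        + (h : ℂ) • (scal P h (G₁ - 1) * (1 - P) * scal P h (G₂ - 1)) := by
  rw [scal, sandwich_mul_sub_one (scaleOp_mul_mul_scaleOp hP2 hh), ← scal, ← scal, seriesProd]
  simp only [mul_add, add_mul, mul_smul_comm, smul_mul_assoc]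
  noncomm_ring

end

theorem composition_of_qrw_generators_compressed_general
    {K : Type*} [NormedAddCommGroup K] [InnerProductSpace ℂ K]
    {H' H'' : Type*} [NormedAddCommGroup H'] [InnerProductSpace ℂ H']
    [NormedAddCommGroup H''] [InnerProductSpace ℂ H'']
    (P : K →L[ℂ] K) (hP2 : P * P = P)
    (F₁ F₂ : K →L[ℂ] K) (G₁ G₂ : ℝ → K →L[ℂ] K)
    (V : K →L[ℂ] H') (W : H'' →L[ℂ] K)
    (h1 : Tendsto (fun h : ℝ => ‖V ∘L (scal P h (G₁ h - 1) - F₁)‖) (𝓝[>] 0) (𝓝 0))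
    (h2 : Tendsto (fun h : ℝ => ‖(scal P h (G₂ h - 1) - F₂) ∘L W‖) (𝓝[>] 0) (𝓝 0)) :
    Tendsto
      (fun h : ℝ => ‖V ∘L (scal P h (G₁ h * G₂ h - 1) - seriesProd P F₁ F₂) ∘L W‖)
      (𝓝[>] 0) (𝓝 0) := by
  rw [← tendsto_zero_iff_norm_tendsto_zero] at h1 h2 ⊢
  have hX : Tendsto (fun h => V ∘L scal P h (G₁ h - 1)) (𝓝[>] 0) (𝓝 (V ∘L F₁)) := by
    simpa [comp_sub] using h1.add_const (V ∘L F₁)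
  have hY : Tendsto (fun h => scal P h (G₂ h - 1) ∘L W) (𝓝[>] 0) (𝓝 (F₂ ∘L W)) := by
    simpa [sub_comp] using h2.add_const (F₂ ∘L W)
  have hh : Tendsto (fun h : ℝ => (h : ℂ)) (𝓝[>] 0) (𝓝 0) :=
    (Complex.continuous_ofReal.tendsto' 0 0 Complex.ofReal_zero).mono_left nhdsWithin_le_nhds
  have hlim := ((((h1.clm_comp (tendsto_const_nhds (x := W))).add
    ((tendsto_const_nhds (x := V)).clm_comp h2)).add
    (h1.clm_comp ((tendsto_const_nhds (x := P)).clm_comp hY))).add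
    ((tendsto_const_nhds (x := V ∘L F₁ ∘L P)).clm_comp h2)).add
    (hh.smul (hX.clm_comp ((tendsto_const_nhds (x := 1 - P)).clm_comp hY)))
  simp only [zero_comp, comp_zero, zero_smul, add_zero] at hlim
  refine hlim.congr' ?_
  filter_upwards [self_mem_nhdsWithin] with h (hpos : 0 < h)
  rw [scal_mul_sub_one_sub_seriesProd hP2 hpos]
  simp only [mul_def, add_comp, comp_add, comp_smul, smul_comp, comp_assoc]

theorem composition_of_qrw_generators_compressed
    {K : Type*} [NormedAddCommGroup K] [InnerProductSpace ℂ K] [CompleteSpace K]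
    {H' H'' : Type*} [NormedAddCommGroup H'] [InnerProductSpace ℂ H'] [CompleteSpace H']
    [NormedAddCommGroup H''] [InnerProductSpace ℂ H''] [CompleteSpace H'']
    (P : K →L[ℂ] K) (hP : IsSelfAdjoint P) (hP2 : P * P = P)
    (F₁ F₂ : K →L[ℂ] K) (G₁ G₂ : ℝ → K →L[ℂ] K)
    (V : K →L[ℂ] H') (W : H'' →L[ℂ] K)
    (h1 : Tendsto (fun h : ℝ => ‖V ∘L (scal P h (G₁ h - 1) - F₁)‖) (𝓝[>] 0) (𝓝 0))
    (h2 : Tendsto (fun h : ℝ => ‖(scal P h (G₂ h - 1) - F₂) ∘L W‖) (𝓝[>] 0) (𝓝 0)) :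
    Tendsto
      (fun h : ℝ => ‖V ∘L (scal P h (G₁ h * G₂ h - 1) - seriesProd P F₁ F₂) ∘L W‖)
      (𝓝[>] 0) (𝓝 0) :=
  composition_of_qrw_generators_compressed_general P hP2 F₁ F₂ G₁ G₂ V W h1 h2
end
end

section
/- Let K be a complex Hilbert space, P an orthogonal projection on K, and for h > 0 let s_h(T) := S_h T S_h where S_h := h^{-1/2}(I − P) + P. Let F₁, F₂ ∈ B(K) and let G₁(h), G₂(h) ∈ B(K) for each h > 0. If ‖s_h(G₁(h) − I) − F₁‖ → 0 and ‖s_h(G₂(h) − I) − F₂‖ → 0 as h → 0, then ‖s_h(G₁(h)G₂(h) − I) − F₁ ◁ F₂‖ → 0 as h → 0, where F₁ ◁ F₂ := F₁ + F₂ + F₁ P F₂. -/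
/-!
The scaling map is multiplicative up to the twist `S_h⁻² = h (I - P) + P`:
`s_h(AB) = s_h(A) S_h⁻² s_h(B)`. Expanding
`G₁G₂ - I = (G₁ - I) + (G₂ - I) + (G₁ - I)(G₂ - I)` and using
`S_h⁻² → P` as `h → 0` yields `F₁ + F₂ + F₁ P F₂` in the limit.
-/

open ContinuousLinearMap Filter Topology

noncomputable section

section Scaling

variable {K : Type*} [NormedAddCommGroup K] [InnerProductSpace ℂ K] (P : K →L[ℂ] K)

def scaleOpSqInv (h : ℝ) : K →L[ℂ] K :=
  (h : ℂ) • (1 - P) + P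

lemma tendsto_scaleOpSqInv : Tendsto (scaleOpSqInv P) (𝓝 0) (𝓝 P) := by
  have hcont : Continuous (scaleOpSqInv P) :=
    (Complex.continuous_ofReal.smul continuous_const).add continuous_const
  simpa [scaleOpSqInv] using hcont.tendsto 0

lemma scaleOp_mul_scaleOpSqInv_mul_scaleOp (hP2 : P * P = P) {h : ℝ} (hh : 0 < h) :
    scaleOp P h * scaleOpSqInv P h * scaleOp P h = 1 := by
  have hQP : (1 - P) * P = 0 := by simp [sub_mul, hP2]
  have hPQ : P * (1 - P) = 0 := by simp [mul_sub, hP2]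
  have hQQ : (1 - P) * (1 - P) = 1 - P := by simp [mul_sub, sub_mul, hP2]
  have hsqrt : ((Real.sqrt h : ℂ))⁻¹ * ((h : ℂ) * ((Real.sqrt h : ℂ))⁻¹) = 1 := by
    have hne : (Real.sqrt h : ℂ) ≠ 0 := by exact_mod_cast (Real.sqrt_pos.mpr hh).ne'
    field_simp
    exact_mod_cast (Real.sq_sqrt hh.le).symm
  simp only [scaleOp, scaleOpSqInv, mul_add, add_mul, smul_mul_assoc, mul_smul_comm, smul_smul,
    hQP, hPQ, hQQ, hP2, smul_zero, add_zero, zero_add]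
  rw [hsqrt, one_smul, sub_add_cancel]

lemma scal_add (h : ℝ) (T₁ T₂ : K →L[ℂ] K) :
    scal P h (T₁ + T₂) = scal P h T₁ + scal P h T₂ := by
  simp only [scal, mul_add, add_mul]

lemma scal_mul (hP2 : P * P = P) {h : ℝ} (hh : 0 < h) (T₁ T₂ : K →L[ℂ] K) :
    scal P h (T₁ * T₂) = scal P h T₁ * scaleOpSqInv P h * scal P h T₂ := by
  have hcancel := scaleOp_mul_scaleOpSqInv_mul_scaleOp P hP2 hh
  calc scal P h (T₁ * T₂)
      = scaleOp P h * T₁ * (scaleOp P h * scaleOpSqInv P h * scaleOp P h) * T₂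
          * scaleOp P h := by
        rw [hcancel, mul_one, scal, ← mul_assoc]
    _ = scal P h T₁ * scaleOpSqInv P h * scal P h T₂ := by
        simp only [scal, mul_assoc]

lemma scal_mul_sub_one (hP2 : P * P = P) {h : ℝ} (hh : 0 < h) (A B : K →L[ℂ] K) :
    scal P h (A * B - 1) =
      scal P h (A - 1) + scal P h (B - 1)
        + scal P h (A - 1) * scaleOpSqInv P h * scal P h (B - 1) := by
  have hsplit : A * B - 1 = (A - 1) + (B - 1) + (A - 1) * (B - 1) := by noncomm_ring
  rw [hsplit, scal_add, scal_add, scal_mul P hP2 hh]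

end Scaling

theorem composition_of_qrw_generators_general
    {K : Type*} [NormedAddCommGroup K] [InnerProductSpace ℂ K]
    (P : K →L[ℂ] K) (hP2 : P * P = P)
    (F₁ F₂ : K →L[ℂ] K) (G₁ G₂ : ℝ → K →L[ℂ] K)
    (h1 : Tendsto (fun h : ℝ => ‖scal P h (G₁ h - 1) - F₁‖) (𝓝[>] 0) (𝓝 0))
    (h2 : Tendsto (fun h : ℝ => ‖scal P h (G₂ h - 1) - F₂‖) (𝓝[>] 0) (𝓝 0)) :
    Tendsto (fun h : ℝ => ‖scal P h (G₁ h * G₂ h - 1) - seriesProd P F₁ F₂‖)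
      (𝓝[>] 0) (𝓝 0) := by
  have hA := tendsto_iff_norm_sub_tendsto_zero.mpr h1
  have hB := tendsto_iff_norm_sub_tendsto_zero.mpr h2
  have hQ : Tendsto (scaleOpSqInv P) (𝓝[>] 0) (𝓝 P) :=
    (tendsto_scaleOpSqInv P).mono_left nhdsWithin_le_nhds
  have hexpand : ∀ᶠ h : ℝ in 𝓝[>] 0,
      scal P h (G₁ h - 1) + scal P h (G₂ h - 1)
          + scal P h (G₁ h - 1) * scaleOpSqInv P h * scal P h (G₂ h - 1)
        = scal P h (G₁ h * G₂ h - 1) := by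
    filter_upwards [self_mem_nhdsWithin] with h hh
    exact (scal_mul_sub_one P hP2 hh (G₁ h) (G₂ h)).symm
  have hlim : Tendsto (fun h : ℝ => scal P h (G₁ h * G₂ h - 1)) (𝓝[>] 0)
      (𝓝 (seriesProd P F₁ F₂)) :=
    ((hA.add hB).add ((hA.mul hQ).mul hB)).congr' hexpand
  exact tendsto_iff_norm_sub_tendsto_zero.mp hlim

theorem composition_of_qrw_generators
    {K : Type*} [NormedAddCommGroup K] [InnerProductSpace ℂ K] [CompleteSpace K]
    (P : K →L[ℂ] K) (hP : IsSelfAdjoint P) (hP2 : P * P = P)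
    (F₁ F₂ : K →L[ℂ] K) (G₁ G₂ : ℝ → K →L[ℂ] K)
    (h1 : Tendsto (fun h : ℝ => ‖scal P h (G₁ h - 1) - F₁‖) (𝓝[>] 0) (𝓝 0))
    (h2 : Tendsto (fun h : ℝ => ‖scal P h (G₂ h - 1) - F₂‖) (𝓝[>] 0) (𝓝 0)) :
    Tendsto (fun h : ℝ => ‖scal P h (G₁ h * G₂ h - 1) - seriesProd P F₁ F₂‖)
      (𝓝[>] 0) (𝓝 0) :=
  composition_of_qrw_generators_general P hP2 F₁ F₂ G₁ G₂ h1 h2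
end
end

section
/- Let H be a complex Hilbert space, let a ∈ B(H), and for each h > 0 let a(h) ∈ B(H). Suppose ‖a(h) − a‖ → 0 as h → 0. Then for every T ≥ 0, sup { ‖(I + h·a(h))^{⌊t/h⌋ − ⌊r/h⌋} − exp((t − r)·a)‖ : 0 ≤ r ≤ t ≤ T } → 0 as h → 0. -/
/-!
One Euler step is close to one exponential step: `‖(1 + h b) - exp (h a)‖ ≤ h ‖b - a‖ + O(h²)`.
All factors involved have norm at most `exp (h C)`, so telescoping
`xⁿ - yⁿ = ∑ xⁱ (x - y) yⁿ⁻¹⁻ⁱ` gives `‖(1 + h b)ⁿ - exp (n h a)‖ ≤ e^{SC} n h (‖b - a‖ + O(h))`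
as long as `n h ≤ S`. With `n = ⌊t/h⌋ - ⌊r/h⌋`, the time `n h` differs from `t - r` by at most
`h`, which costs a further `O(h)`, uniformly in `0 ≤ r ≤ t ≤ T`.
-/

section NormedRing

variable {A : Type*} [NormedRing A]

theorem norm_pow_le_of_norm_one_le (hone : ‖(1 : A)‖ ≤ 1) (x : A) (n : ℕ) :
    ‖x ^ n‖ ≤ ‖x‖ ^ n := by
  rcases n.eq_zero_or_pos with rfl | hn
  · simpa using hone
  · exact norm_pow_le' x hn

theorem norm_pow_sub_pow_le (hone : ‖(1 : A)‖ ≤ 1) {x y : A} {M : ℝ} (hx : ‖x‖ ≤ M)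
    (hy : ‖y‖ ≤ M) (n : ℕ) : ‖x ^ n - y ^ n‖ ≤ n * M ^ (n - 1) * ‖x - y‖ := by
  induction n with
  | zero => simp
  | succ n ih =>
    have hxn : ‖x ^ n‖ ≤ M ^ n :=
      (norm_pow_le_of_norm_one_le hone x n).trans (pow_le_pow_left₀ (norm_nonneg x) hx n)
    have hM : n * M ^ (n - 1) * M = n * M ^ n := by
      rcases n with _ | n
      · simp
      · rw [Nat.add_sub_cancel, mul_assoc, ← pow_succ]
    calc ‖x ^ (n + 1) - y ^ (n + 1)‖ = ‖x ^ n * (x - y) + (x ^ n - y ^ n) * y‖ := by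
          rw [pow_succ, pow_succ]; noncomm_ring
      _ ≤ ‖x ^ n‖ * ‖x - y‖ + ‖x ^ n - y ^ n‖ * ‖y‖ :=
          (norm_add_le _ _).trans (add_le_add (norm_mul_le _ _) (norm_mul_le _ _))
      _ ≤ M ^ n * ‖x - y‖ + n * M ^ (n - 1) * ‖x - y‖ * M := by
          have hM0 : 0 ≤ M := (norm_nonneg y).trans hy
          gcongr
      _ = (n + 1 : ℕ) * M ^ (n + 1 - 1) * ‖x - y‖ := by
          rw [Nat.add_sub_cancel, mul_right_comm _ ‖x - y‖, hM]; push_cast; ring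

end NormedRing

namespace NormedSpace

variable {A : Type*} [NormedRing A] [NormedAlgebra ℚ A] [CompleteSpace A]

theorem norm_exp_sub_sum_range_le (hone : ‖(1 : A)‖ ≤ 1) (x : A) (m : ℕ) :
    ‖exp x - ∑ k ∈ Finset.range m, (k.factorial⁻¹ : ℚ) • x ^ k‖ ≤ ‖x‖ ^ m * Real.exp ‖x‖ := by
  have hsummable := expSeries_summable' (𝕂 := ℚ) x
  have hterm (n : ℕ) :
      ‖((n + m).factorial⁻¹ : ℚ) • x ^ (n + m)‖ ≤ ‖x‖ ^ m * (‖x‖ ^ n / n.factorial) := by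
    rw [norm_smul, norm_inv, ← Rat.norm_cast_real, Rat.cast_natCast, Real.norm_natCast]
    calc ((n + m).factorial : ℝ)⁻¹ * ‖x ^ (n + m)‖ ≤ (n.factorial : ℝ)⁻¹ * ‖x‖ ^ (n + m) := by
          gcongr
          · exact Nat.le_add_right n m
          · exact norm_pow_le_of_norm_one_le hone x _
      _ = ‖x‖ ^ m * (‖x‖ ^ n / n.factorial) := by ring
  calc ‖exp x - ∑ k ∈ Finset.range m, (k.factorial⁻¹ : ℚ) • x ^ k‖
      = ‖∑' n, ((n + m).factorial⁻¹ : ℚ) • x ^ (n + m)‖ := by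
        rw [← (exp_series_hasSum_exp' (𝕂 := ℚ) x).tsum_eq, ← hsummable.sum_add_tsum_nat_add m,
          add_sub_cancel_left]
    _ ≤ ∑' n, ‖x‖ ^ m * (‖x‖ ^ n / n.factorial) :=
        tsum_of_norm_bounded ((Real.summable_pow_div_factorial ‖x‖).mul_left _).hasSum hterm
    _ = ‖x‖ ^ m * Real.exp ‖x‖ := by
        rw [tsum_mul_left, Real.exp_eq_exp_ℝ, exp_eq_tsum_div]

theorem norm_exp_le (hone : ‖(1 : A)‖ ≤ 1) (x : A) : ‖exp x‖ ≤ Real.exp ‖x‖ := by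
  simpa using norm_exp_sub_sum_range_le hone x 0

theorem norm_exp_sub_one_le (hone : ‖(1 : A)‖ ≤ 1) (x : A) :
    ‖exp x - 1‖ ≤ ‖x‖ * Real.exp ‖x‖ := by
  simpa using norm_exp_sub_sum_range_le hone x 1

theorem norm_exp_sub_one_sub_le (hone : ‖(1 : A)‖ ≤ 1) (x : A) :
    ‖exp x - 1 - x‖ ≤ ‖x‖ ^ 2 * Real.exp ‖x‖ := by
  simpa [Finset.sum_range_succ, sub_sub] using norm_exp_sub_sum_range_le hone x 2

end NormedSpace

section RCLikeAlgebra

variable {𝕜 A : Type*} [RCLike 𝕜] [NormedRing A] [NormedAlgebra 𝕜 A]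

theorem norm_ofReal_smul_of_nonneg {h : ℝ} (hh : 0 ≤ h) (x : A) : ‖(h : 𝕜) • x‖ = h * ‖x‖ := by
  rw [norm_smul, RCLike.norm_ofReal, abs_of_nonneg hh]

theorem norm_one_add_smul_le_exp (hone : ‖(1 : A)‖ ≤ 1) {h : ℝ} (hh : 0 ≤ h) (b : A) :
    ‖1 + (h : 𝕜) • b‖ ≤ Real.exp (h * ‖b‖) :=
  calc ‖1 + (h : 𝕜) • b‖ ≤ 1 + h * ‖b‖ :=
        (norm_add_le _ _).trans (add_le_add hone (norm_ofReal_smul_of_nonneg hh b).le)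
    _ ≤ Real.exp (h * ‖b‖) := by linarith [Real.add_one_le_exp (h * ‖b‖)]

variable [CompleteSpace A]

open NormedSpace

theorem exp_ofReal_smul_pow (a : A) (h : ℝ) (n : ℕ) :
    exp ((h : 𝕜) • a) ^ n = exp (((n * h : ℝ) : 𝕜) • a) := by
  let +nondep : NormedAlgebra ℚ A := .restrictScalars ℚ 𝕜 A
  rw [← exp_nsmul, ← Nat.cast_smul_eq_nsmul 𝕜, smul_smul]
  push_cast
  rfl

theorem norm_one_add_smul_sub_exp_smul_le (hone : ‖(1 : A)‖ ≤ 1) {h : ℝ} (hh : 0 ≤ h)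
    (a b : A) :
    ‖1 + (h : 𝕜) • b - exp ((h : 𝕜) • a)‖ ≤ h * (‖b - a‖ + h * ‖a‖ ^ 2 * Real.exp (h * ‖a‖)) := by
  let +nondep : NormedAlgebra ℚ A := .restrictScalars ℚ 𝕜 A
  have hsplit : 1 + (h : 𝕜) • b - exp ((h : 𝕜) • a) =
      (h : 𝕜) • (b - a) - (exp ((h : 𝕜) • a) - 1 - (h : 𝕜) • a) := by
    rw [smul_sub]; abel
  calc ‖1 + (h : 𝕜) • b - exp ((h : 𝕜) • a)‖
      ≤ ‖(h : 𝕜) • (b - a)‖ + ‖exp ((h : 𝕜) • a) - 1 - (h : 𝕜) • a‖ := by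
        rw [hsplit]; exact norm_sub_le _ _
    _ ≤ h * ‖b - a‖ + (h * ‖a‖) ^ 2 * Real.exp (h * ‖a‖) := by
        rw [norm_ofReal_smul_of_nonneg hh]
        gcongr
        simpa only [norm_ofReal_smul_of_nonneg hh] using norm_exp_sub_one_sub_le hone ((h : 𝕜) • a)
    _ = h * (‖b - a‖ + h * ‖a‖ ^ 2 * Real.exp (h * ‖a‖)) := by ring

theorem norm_exp_smul_sub_exp_smul_le (hone : ‖(1 : A)‖ ≤ 1) (a : A) (u v : ℝ) :
    ‖exp ((u : 𝕜) • a) - exp ((v : 𝕜) • a)‖ ≤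
      Real.exp (|u| * ‖a‖) * (|v - u| * ‖a‖ * Real.exp (|v - u| * ‖a‖)) := by
  let +nondep : NormedAlgebra ℚ A := .restrictScalars ℚ 𝕜 A
  have hsplit : exp ((u : 𝕜) • a) - exp ((v : 𝕜) • a) =
      exp ((u : 𝕜) • a) * -(exp (((v - u : ℝ) : 𝕜) • a) - 1) := by
    rw [mul_neg, mul_sub, mul_one,
      ← exp_add_of_commute (((Commute.refl a).smul_left _).smul_right _), ← add_smul]
    push_cast
    rw [add_sub_cancel]
    abel
  rw [hsplit]
  refine (norm_mul_le _ _).trans ?_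
  rw [norm_neg]
  gcongr
  · simpa only [norm_smul, RCLike.norm_ofReal] using norm_exp_le hone ((u : 𝕜) • a)
  · simpa only [norm_smul, RCLike.norm_ofReal] using
      norm_exp_sub_one_le hone (((v - u : ℝ) : 𝕜) • a)

theorem norm_one_add_smul_pow_sub_exp_smul_le (hone : ‖(1 : A)‖ ≤ 1) {a b : A} {C h s S : ℝ}
    (ha : ‖a‖ ≤ C) (hb : ‖b‖ ≤ C) (hh : 0 ≤ h) {n : ℕ} (hns : |n * h - s| ≤ h) (hnS : n * h ≤ S) :
    ‖(1 + (h : 𝕜) • b) ^ n - exp ((s : 𝕜) • a)‖ ≤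
      Real.exp (S * C) *
        (S * (‖b - a‖ + h * C ^ 2 * Real.exp (h * C)) + h * C * Real.exp (h * C)) := by
  let +nondep : NormedAlgebra ℚ A := .restrictScalars ℚ 𝕜 A
  have hC : 0 ≤ C := (norm_nonneg a).trans ha
  have hnh : 0 ≤ n * h := by positivity
  have hS : 0 ≤ S := hnh.trans hnS
  have hX : ‖1 + (h : 𝕜) • b‖ ≤ Real.exp (h * C) :=
    (norm_one_add_smul_le_exp hone hh b).trans (by gcongr)
  have hZ : ‖exp ((h : 𝕜) • a)‖ ≤ Real.exp (h * C) := by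
    refine (norm_exp_le hone _).trans ?_
    rw [norm_ofReal_smul_of_nonneg hh]
    gcongr
  have hpow : Real.exp (h * C) ^ (n - 1) ≤ Real.exp (S * C) :=
    calc Real.exp (h * C) ^ (n - 1) ≤ Real.exp (h * C) ^ n :=
          pow_le_pow_right₀ (Real.one_le_exp (by positivity)) (n.sub_le 1)
      _ = Real.exp (n * h * C) := by rw [← Real.exp_nat_mul, mul_assoc]
      _ ≤ Real.exp (S * C) := by gcongr
  have hstep : ‖1 + (h : 𝕜) • b - exp ((h : 𝕜) • a)‖ ≤
      h * (‖b - a‖ + h * C ^ 2 * Real.exp (h * C)) :=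
    (norm_one_add_smul_sub_exp_smul_le hone hh a b).trans (by gcongr)
  have hshift : ‖exp (((n * h : ℝ) : 𝕜) • a) - exp ((s : 𝕜) • a)‖ ≤
      Real.exp (S * C) * (h * C * Real.exp (h * C)) := by
    refine (norm_exp_smul_sub_exp_smul_le hone a _ _).trans ?_
    rw [abs_of_nonneg hnh, abs_sub_comm]
    gcongr
  calc ‖(1 + (h : 𝕜) • b) ^ n - exp ((s : 𝕜) • a)‖
      ≤ ‖(1 + (h : 𝕜) • b) ^ n - exp ((h : 𝕜) • a) ^ n‖ +
          ‖exp (((n * h : ℝ) : 𝕜) • a) - exp ((s : 𝕜) • a)‖ := by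
        rw [← exp_ofReal_smul_pow]; exact norm_sub_le_norm_sub_add_norm_sub _ _ _
    _ ≤ n * Real.exp (h * C) ^ (n - 1) * (h * (‖b - a‖ + h * C ^ 2 * Real.exp (h * C))) +
          Real.exp (S * C) * (h * C * Real.exp (h * C)) := by
        gcongr
        exact (norm_pow_sub_pow_le hone hX hZ n).trans (by gcongr)
    _ = n * h * Real.exp (h * C) ^ (n - 1) * (‖b - a‖ + h * C ^ 2 * Real.exp (h * C)) +
          Real.exp (S * C) * (h * C * Real.exp (h * C)) := by ring
    _ ≤ S * Real.exp (S * C) * (‖b - a‖ + h * C ^ 2 * Real.exp (h * C)) +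
          Real.exp (S * C) * (h * C * Real.exp (h * C)) := by gcongr
    _ = Real.exp (S * C) * (S * (‖b - a‖ + h * C ^ 2 * Real.exp (h * C)) +
          h * C * Real.exp (h * C)) := by ring

end RCLikeAlgebra

theorem abs_natFloor_div_sub_natFloor_div_mul_sub_le {h r t : ℝ} (hh : 0 < h) (hr : 0 ≤ r)
    (hrt : r ≤ t) : |((⌊t / h⌋₊ - ⌊r / h⌋₊ : ℕ) : ℝ) * h - (t - r)| ≤ h := by
  have hr₁ : (⌊r / h⌋₊ : ℝ) * h ≤ r := (le_div_iff₀ hh).1 (Nat.floor_le (by positivity))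
  have ht₁ : (⌊t / h⌋₊ : ℝ) * h ≤ t :=
    (le_div_iff₀ hh).1 (Nat.floor_le (div_nonneg (hr.trans hrt) hh.le))
  have hr₂ : r < (⌊r / h⌋₊ + 1) * h := (div_lt_iff₀ hh).1 (Nat.lt_floor_add_one _)
  have ht₂ : t < (⌊t / h⌋₊ + 1) * h := (div_lt_iff₀ hh).1 (Nat.lt_floor_add_one _)
  rw [Nat.cast_sub (Nat.floor_le_floor (by gcongr)), abs_le]
  constructor <;> linarith

open ContinuousLinearMap Filter Topology

theorem euler_exponential_formula_locally_uniform_general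
    {H : Type*} [NormedAddCommGroup H] [InnerProductSpace ℂ H] [CompleteSpace H]
    (a : H →L[ℂ] H) (ah : ℝ → H →L[ℂ] H)
    (hcgce : Tendsto (fun h : ℝ => ‖ah h - a‖) (𝓝[>] 0) (𝓝 0))
    (T : ℝ) :
    ∀ ε > 0, ∀ᶠ h : ℝ in 𝓝[>] 0, ∀ r t : ℝ, 0 ≤ r → r ≤ t → t ≤ T →
      ‖(1 + (h : ℂ) • ah h) ^ (⌊t / h⌋₊ - ⌊r / h⌋₊) -
        NormedSpace.exp (((t - r : ℝ) : ℂ) • a)‖ < ε := by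
  intro ε hε
  set C := ‖a‖ + 1
  set S := T + 1
  have hbound : Tendsto (fun h => Real.exp (S * C) *
      (S * (‖ah h - a‖ + h * C ^ 2 * Real.exp (h * C)) + h * C * Real.exp (h * C)))
      (𝓝[>] 0) (𝓝 0) := by
    have hcont : Continuous fun p : ℝ × ℝ => Real.exp (S * C) *
        (S * (p.1 + p.2 * C ^ 2 * Real.exp (p.2 * C)) + p.2 * C * Real.exp (p.2 * C)) := by
      fun_prop
    simpa [Function.comp_def] using
      (hcont.tendsto (0, 0)).comp (hcgce.prodMk_nhds nhdsWithin_le_nhds)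
  filter_upwards [hbound.eventually_lt_const hε, hcgce.eventually_lt_const one_pos,
    self_mem_nhdsWithin, nhdsWithin_le_nhds (Iio_mem_nhds one_pos)]
    with h hlt hah (hh : 0 < h) (hh1 : h < 1) r t hr hrt htT
  have hns := abs_natFloor_div_sub_natFloor_div_mul_sub_le hh hr hrt
  refine (norm_one_add_smul_pow_sub_exp_smul_le norm_id_le (le_add_of_nonneg_right zero_le_one)
    ((norm_le_norm_add_norm_sub' (ah h) a).trans (by gcongr)) hh.le hns ?_).trans_lt hlt
  linarith [(abs_le.1 hns).2]

theorem euler_exponential_formula_locally_uniform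
    {H : Type*} [NormedAddCommGroup H] [InnerProductSpace ℂ H] [CompleteSpace H]
    (a : H →L[ℂ] H) (ah : ℝ → H →L[ℂ] H)
    (hcgce : Tendsto (fun h : ℝ => ‖ah h - a‖) (𝓝[>] 0) (𝓝 0))
    (T : ℝ) (hT : 0 ≤ T) :
    ∀ ε > 0, ∀ᶠ h : ℝ in 𝓝[>] 0, ∀ r t : ℝ, 0 ≤ r → r ≤ t → t ≤ T →
      ‖(1 + (h : ℂ) • ah h) ^ (⌊t / h⌋₊ - ⌊r / h⌋₊) -
        NormedSpace.exp (((t - r : ℝ) : ℂ) • a)‖ < ε :=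
  euler_exponential_formula_locally_uniform_general a ah hcgce T
end
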